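/- Let H be a nonnegative real-valued random variable on a probability space (Ω, 𝓕, ℙ) and let t ≥ 0. For real numbers 0 < m₁ ≤ m₂, if exp((t/m₁)·H) is integrable, then (E[exp((t/m₂)·H)])^{m₂} ≤ (E[exp((t/m₁)·H)])^{m₁}. That is, the function m ↦ (E[exp((t/m)·H)])^m is nonincreasing on (0, ∞). -/

import Mathlib

open MeasureTheory Real

/-! The substitution `X = exp ((t / m₁) * H)` turns the claim into
`(E[X ^ (m₁ / m₂)]) ^ m₂ ≤ (E[X]) ^ m₁`, which is Jensen's inequality for the concave map
`x ↦ x ^ (m₁ / m₂)` on `[0, ∞)`, raised to the power `m₂`. -/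

section Jensen

variable {α : Type*} [MeasurableSpace α] {μ : Measure α} {f : α → ℝ}

lemma integrable_rpow_of_le_one [IsFiniteMeasure μ] (hf_nonneg : 0 ≤ᵐ[μ] f)
    (hf : Integrable f μ) {p : ℝ} (hp₀ : 0 ≤ p) (hp₁ : p ≤ 1) :
    Integrable (fun x ↦ f x ^ p) μ := by
  have hnorm : Integrable (fun x ↦ ‖f x‖ ^ p) μ :=
    integrable_norm_rpow_of_le hf.aestronglyMeasurable hp₀ zero_le_one hp₁
      (by simpa only [rpow_one] using hf.norm)
  refine hnorm.congr ?_
  filter_upwards [hf_nonneg] with x hx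
  rw [norm_of_nonneg hx]

lemma integral_rpow_le_rpow_integral [IsProbabilityMeasure μ] (hf_nonneg : 0 ≤ᵐ[μ] f)
    (hf : Integrable f μ) {p : ℝ} (hp₀ : 0 ≤ p) (hp₁ : p ≤ 1) :
    ∫ x, f x ^ p ∂μ ≤ (∫ x, f x ∂μ) ^ p :=
  (concaveOn_rpow hp₀ hp₁).le_map_integral (continuousOn_id.rpow_const fun _ _ ↦ Or.inr hp₀)
    isClosed_Ici hf_nonneg hf (integrable_rpow_of_le_one hf_nonneg hf hp₀ hp₁)

lemma rpow_integral_rpow_div_le [IsProbabilityMeasure μ] (hf_nonneg : 0 ≤ᵐ[μ] f)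
    (hf : Integrable f μ) {m₁ m₂ : ℝ} (hm₁ : 0 < m₁) (hm : m₁ ≤ m₂) :
    (∫ x, f x ^ (m₁ / m₂) ∂μ) ^ m₂ ≤ (∫ x, f x ∂μ) ^ m₁ := by
  have hm₂ : 0 < m₂ := hm₁.trans_le hm
  have hp₀ : 0 ≤ m₁ / m₂ := (div_pos hm₁ hm₂).le
  have hp₁ : m₁ / m₂ ≤ 1 := (div_le_one hm₂).mpr hm
  calc (∫ x, f x ^ (m₁ / m₂) ∂μ) ^ m₂
      ≤ ((∫ x, f x ∂μ) ^ (m₁ / m₂)) ^ m₂ :=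
        rpow_le_rpow (integral_nonneg_of_ae (by
          filter_upwards [hf_nonneg] with x hx using rpow_nonneg hx _))
          (integral_rpow_le_rpow_integral hf_nonneg hf hp₀ hp₁) hm₂.le
    _ = (∫ x, f x ∂μ) ^ m₁ := by
        rw [← rpow_mul (integral_nonneg_of_ae hf_nonneg), div_mul_cancel₀ _ hm₂.ne']

end Jensen

theorem mgf_sample_average_antitone_in_sample_size_general
    {Ω : Type*} [MeasurableSpace Ω] (P : Measure Ω) [IsProbabilityMeasure P]
    (H : Ω → ℝ)
    (t : ℝ)
    (m₁ m₂ : ℝ) (hm₁ : 0 < m₁) (hm : m₁ ≤ m₂)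
    (hint : Integrable (fun ω => Real.exp ((t / m₁) * H ω)) P) :
    (∫ ω, Real.exp ((t / m₂) * H ω) ∂P) ^ m₂ ≤ (∫ ω, Real.exp ((t / m₁) * H ω) ∂P) ^ m₁ := by
  have hsubst : ∀ ω, exp ((t / m₂) * H ω) = exp ((t / m₁) * H ω) ^ (m₁ / m₂) := fun ω ↦ by
    rw [← exp_mul]
    field_simp
  simp_rw [hsubst]
  exact rpow_integral_rpow_div_le (.of_forall fun ω ↦ (exp_pos _).le) hint hm₁ hm

/-- **Monotonicity of the MGF of the sample average in the sample size**
(Theorem 1 of the paper, second part). For a nonnegative random variable `H` and `t ≥ 0`,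
the function `m ↦ (E[exp ((t/m) * H)])^m` is nonincreasing on `(0, ∞)`: for
`0 < m₁ ≤ m₂` with `exp ((t/m₁) * H)` integrable,
`(E[exp ((t/m₂) * H)])^m₂ ≤ (E[exp ((t/m₁) * H)])^m₁` (real powers). -/
theorem mgf_sample_average_antitone_in_sample_size
    {Ω : Type*} [MeasurableSpace Ω] (P : Measure Ω) [IsProbabilityMeasure P]
    (H : Ω → ℝ) (hmeas : Measurable H) (hnonneg : ∀ ω, 0 ≤ H ω)
    (t : ℝ) (ht : 0 ≤ t)
    (m₁ m₂ : ℝ) (hm₁ : 0 < m₁) (hm : m₁ ≤ m₂)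
    (hint : Integrable (fun ω => Real.exp ((t / m₁) * H ω)) P) :
    (∫ ω, Real.exp ((t / m₂) * H ω) ∂P) ^ m₂ ≤ (∫ ω, Real.exp ((t / m₁) * H ω) ∂P) ^ m₁ :=
  mgf_sample_average_antitone_in_sample_size_general P H t m₁ m₂ hm₁ hm hint
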